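/- arXiv:2105.07304 — 5 statements merged into one kernel-verified Lean document; each statement's English description precedes it below -/
import Mathlib

section
/- Let H be an N×N Hermitian complex matrix, t ∈ ℝ and ε ≥ 0. Let U be a unitary map from ℂ^N ⊗ ℂ^M onto ℂ^{N'} ⊗ ℂ^{M'} (with N·M = N'·M'), let e_0 be a distinguished standard basis vector of ℂ^M, let {e_μ} be the standard basis of ℂ^{M'}, and suppose U (H ⊗ |0⟩⟨0|) U† = Σ_μ H'_μ ⊗ |μ⟩⟨μ|, where each H'_μ is an N'×N' Hermitian matrix and |0⟩⟨0|, |μ⟩⟨μ| denote the rank-one projectors onto e_0 and e_μ. Let I'_μ ⊆ ℂ^{N'} be subspaces such that U(ψ ⊗ e_0) ∈ ⊕_μ (I'_μ ⊗ ℂ e_μ) for every ψ ∈ ℂ^N, and let U_μ(t) be N'×N' matrices satisfying ‖(U_μ(t) − exp(−i t H'_μ)) φ‖ ≤ ε ‖φ‖ for all φ ∈ I'_μ. Define V(t) = U† (Σ_μ U_μ(t) ⊗ |μ⟩⟨μ|) U. Then for every unit vector ψ ∈ ℂ^N, ‖(exp(−i t H) ψ) ⊗ e_0 − V(t)(ψ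 ⊗ e_0)‖ ≤ ε. -/
/-!
Write `c = -i t`. Since `H ⊗ |z⟩⟨z|` is block diagonal with its only nonzero block at `z`,
`exp (c H) ψ ⊗ e_z = exp (c (H ⊗ |z⟩⟨z|)) (ψ ⊗ e_z)`; conjugation by `U` is a continuous ring
isomorphism, hence commutes with `exp`, so this equals `U† (⊕_μ exp (c H'_μ)) U (ψ ⊗ e_z)`.
The error vector is therefore `U†` applied to `⊕_μ (exp (c H'_μ) - U_μ)` acting on
`y = U (ψ ⊗ e_z)`. Since `U†` is an isometry and the `μ`-th block of `y` lies in `I'_μ`, the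
squared error is at most `ε² ∑_μ ‖y_μ‖² = ε² ‖y‖² = ε² ‖ψ‖² = ε²`.
-/

open Matrix Kronecker

/-- Euclidean norm of a finitely-indexed complex vector. -/
noncomputable def enorm₂ {ι : Type*} [Fintype ι] (v : ι → ℂ) : ℝ :=
  Real.sqrt (∑ i, ‖v i‖ ^ 2)

/-- Tensor (Kronecker) product of two vectors. -/
def vecKron {ι κ : Type*} (v : ι → ℂ) (w : κ → ℂ) : ι × κ → ℂ :=
  fun p => v p.1 * w p.2

section EuclideanNorm

variable {ι κ : Type*} [Fintype ι] [Fintype κ]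

theorem enorm₂_nonneg (v : ι → ℂ) : 0 ≤ enorm₂ v :=
  Real.sqrt_nonneg _

theorem enorm₂_sq (v : ι → ℂ) : enorm₂ v ^ 2 = ∑ i, ‖v i‖ ^ 2 :=
  Real.sq_sqrt (Finset.sum_nonneg fun _ _ => sq_nonneg _)

theorem enorm₂_neg (v : ι → ℂ) : enorm₂ (-v) = enorm₂ v := by
  simp [enorm₂]

theorem enorm₂_sq_eq_re_dotProduct (v : ι → ℂ) : enorm₂ v ^ 2 = (star v ⬝ᵥ v).re := by
  simp only [enorm₂_sq, dotProduct, Pi.star_apply, Complex.re_sum, RCLike.star_def,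
    Complex.conj_mul', ← Complex.ofReal_pow, Complex.ofReal_re]

theorem enorm₂_mulVec_of_conjTranspose_mul_self [DecidableEq κ] (U : Matrix ι κ ℂ)
    (hU : Uᴴ * U = 1) (v : κ → ℂ) : enorm₂ (U *ᵥ v) = enorm₂ v := by
  rw [← sq_eq_sq₀ (enorm₂_nonneg _) (enorm₂_nonneg _), enorm₂_sq_eq_re_dotProduct,
    enorm₂_sq_eq_re_dotProduct, star_mulVec, dotProduct_mulVec, vecMul_vecMul, hU, vecMul_one]

theorem enorm₂_vecKron (v : ι → ℂ) (w : κ → ℂ) :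
    enorm₂ (vecKron v w) = enorm₂ v * enorm₂ w := by
  rw [enorm₂, enorm₂, enorm₂, ← Real.sqrt_mul (Finset.sum_nonneg fun _ _ => sq_nonneg _),
    Finset.sum_mul_sum, Fintype.sum_prod_type]
  simp only [vecKron, norm_mul, mul_pow]

theorem enorm₂_single [DecidableEq ι] (i : ι) : enorm₂ (Pi.single i (1 : ℂ)) = 1 := by
  simp [enorm₂, Pi.single_apply, apply_ite]

theorem enorm₂_sq_eq_sum_slices (y : ι × κ → ℂ) :
    enorm₂ y ^ 2 = ∑ k, enorm₂ (fun i => y (i, k)) ^ 2 := by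
  simp only [enorm₂_sq, Fintype.sum_prod_type_right]

end EuclideanNorm

section BlockDiagonal

variable {m o R : Type*} [Fintype o] [DecidableEq o]

theorem blockDiagonal_mulVec_apply [Fintype m] [NonUnitalNonAssocSemiring R]
    (E : o → Matrix m m R) (y : m × o → R) (i : m) (k : o) :
    (blockDiagonal E *ᵥ y) (i, k) = (E k *ᵥ fun j => y (j, k)) i := by
  simp [mulVec, dotProduct, Fintype.sum_prod_type, blockDiagonal_apply, ite_mul]

theorem sum_kronecker_single_eq_blockDiagonal [Semiring R] (A : o → Matrix m m R) :
    ∑ k, A k ⊗ₖ single k k (1 : R) = blockDiagonal A := by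
  ext ⟨i, k⟩ ⟨j, l⟩
  simp [Matrix.sum_apply, blockDiagonal_apply, single, ite_and]

theorem kronecker_single_eq_blockDiagonal [Semiring R] (A : Matrix m m R) (k : o) :
    A ⊗ₖ single k k (1 : R) = blockDiagonal (Pi.single k A) := by
  rw [← sum_kronecker_single_eq_blockDiagonal, Fintype.sum_eq_single k fun l hl => by
    rw [Pi.single_eq_of_ne hl, zero_kronecker], Pi.single_eq_same]

theorem blockDiagonal_mulVec_vecKron_single [Fintype m] (B : o → Matrix m m ℂ) (ψ : m → ℂ)
    (k : o) :
    blockDiagonal B *ᵥ vecKron ψ (Pi.single k 1) = vecKron (B k *ᵥ ψ) (Pi.single k 1) := by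
  ext ⟨i, l⟩
  rw [blockDiagonal_mulVec_apply]
  by_cases hl : l = k
  · subst hl
    simp [vecKron]
  · simp [vecKron, Pi.single_eq_of_ne hl, mulVec, dotProduct]

theorem enorm₂_blockDiagonal_mulVec_le [Fintype m] (E : o → Matrix m m ℂ) (y : m × o → ℂ)
    {ε : ℝ} (hε : 0 ≤ ε)
    (hE : ∀ k, enorm₂ (E k *ᵥ fun i => y (i, k)) ≤ ε * enorm₂ fun i => y (i, k)) :
    enorm₂ (blockDiagonal E *ᵥ y) ≤ ε * enorm₂ y := by
  refine (pow_le_pow_iff_left₀ (enorm₂_nonneg _)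
    (mul_nonneg hε (enorm₂_nonneg _)) two_ne_zero).mp ?_
  rw [mul_pow, enorm₂_sq_eq_sum_slices, enorm₂_sq_eq_sum_slices, Finset.mul_sum]
  refine Finset.sum_le_sum fun k _ => ?_
  simp only [blockDiagonal_mulVec_apply, ← mul_pow]
  exact pow_le_pow_left₀ (enorm₂_nonneg _) (hE k) 2

end BlockDiagonal

section Exponential

open NormedSpace

variable {m n : Type*} [Fintype m] [DecidableEq m] [Fintype n] [DecidableEq n]

theorem exp_blockDiagonal_eq_blockDiagonal_exp (A : n → Matrix m m ℂ) :
    exp (blockDiagonal A) = blockDiagonal fun k => exp (A k) := by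
  -- `exp` does not depend on a norm; the `L∞` operator norm only gives access to the normed API.
  let : NormedRing (Matrix m m ℂ) := Matrix.linftyOpNormedRing
  let : NormedAlgebra ℂ (Matrix m m ℂ) := Matrix.linftyOpNormedAlgebra
  let : NormedAlgebra ℚ (Matrix m m ℂ) := Matrix.linftyOpNormedAlgebra
  rw [exp_blockDiagonal]
  congr 1
  funext k
  exact Pi.coe_exp A k

theorem exp_conjTranspose_mul_mul (U : Matrix m n ℂ) (hU₁ : Uᴴ * U = 1) (hU₂ : U * Uᴴ = 1)
    (X : Matrix m m ℂ) : exp (Uᴴ * X * U) = Uᴴ * exp X * U := by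
  let : NormedRing (Matrix m m ℂ) := Matrix.linftyOpNormedRing
  let : NormedAlgebra ℂ (Matrix m m ℂ) := Matrix.linftyOpNormedAlgebra
  let : NormedAlgebra ℚ (Matrix m m ℂ) := Matrix.linftyOpNormedAlgebra
  let : NormedRing (Matrix n n ℂ) := Matrix.linftyOpNormedRing
  let : NormedAlgebra ℂ (Matrix n n ℂ) := Matrix.linftyOpNormedAlgebra
  let : NormedAlgebra ℚ (Matrix n n ℂ) := Matrix.linftyOpNormedAlgebra
  let conj : Matrix m m ℂ →+* Matrix n n ℂ :=
    { toFun := fun X => Uᴴ * X * U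
      map_one' := by rw [Matrix.mul_one, hU₁]
      map_mul' := fun X Y => by
        simp only [Matrix.mul_assoc]
        rw [← Matrix.mul_assoc U Uᴴ, hU₂, Matrix.one_mul]
      map_zero' := by simp
      map_add' := fun X Y => by simp [Matrix.mul_add, Matrix.add_mul] }
  exact (map_exp conj ((continuous_const.matrix_mul continuous_id).matrix_mul
    continuous_const) X).symm

theorem exp_kronecker_single_mulVec_vecKron (A : Matrix m m ℂ) (ψ : m → ℂ) (k : n) :
    exp (A ⊗ₖ single k k (1 : ℂ)) *ᵥ vecKron ψ (Pi.single k 1)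
      = vecKron (exp A *ᵥ ψ) (Pi.single k 1) := by
  rw [kronecker_single_eq_blockDiagonal, exp_blockDiagonal_eq_blockDiagonal_exp,
    blockDiagonal_mulVec_vecKron_single, Pi.single_eq_same]

end Exponential

theorem block_diagonalization_simulation_general
    {N M N' M' : ℕ}
    (H : Matrix (Fin N) (Fin N) ℂ)
    (t ε : ℝ) (hε : 0 ≤ ε)
    (U : Matrix (Fin N' × Fin M') (Fin N × Fin M) ℂ)
    (hU1 : Uᴴ * U = 1) (hU2 : U * Uᴴ = 1)
    (z : Fin M)
    (H' : Fin M' → Matrix (Fin N') (Fin N') ℂ)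
    (hblock : U * (H ⊗ₖ single z z (1 : ℂ)) * Uᴴ
      = ∑ μ, (H' μ) ⊗ₖ single μ μ (1 : ℂ))
    (I' : Fin M' → Submodule ℂ (Fin N' → ℂ))
    (hsupp : ∀ ψ : Fin N → ℂ, ∀ μ : Fin M',
      (fun i => U.mulVec (vecKron ψ (Pi.single z 1)) (i, μ)) ∈ I' μ)
    (Uu : Fin M' → Matrix (Fin N') (Fin N') ℂ)
    (happrox : ∀ μ : Fin M', ∀ φ ∈ I' μ,
      enorm₂ ((Uu μ - NormedSpace.exp ((-(Complex.I * (t : ℂ))) • H' μ)).mulVec φ)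
        ≤ ε * enorm₂ φ)
    (V : Matrix (Fin N × Fin M) (Fin N × Fin M) ℂ)
    (hV : V = Uᴴ * (∑ μ, (Uu μ) ⊗ₖ single μ μ (1 : ℂ)) * U)
    (ψ : Fin N → ℂ) (hψ : enorm₂ ψ = 1) :
    enorm₂ (vecKron ((NormedSpace.exp ((-(Complex.I * (t : ℂ))) • H)).mulVec ψ)
        (Pi.single z 1)
      - V.mulVec (vecKron ψ (Pi.single z 1))) ≤ ε := by
  set c : ℂ := -(Complex.I * t)
  set x := vecKron ψ (Pi.single z (1 : ℂ))
  have hconj : H ⊗ₖ single z z (1 : ℂ) = Uᴴ * blockDiagonal H' * U := by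
    rw [← sum_kronecker_single_eq_blockDiagonal, ← hblock, ← Matrix.mul_assoc,
      ← Matrix.mul_assoc, hU1, Matrix.one_mul, Matrix.mul_assoc, hU1, Matrix.mul_one]
  have hexact : vecKron (NormedSpace.exp (c • H) *ᵥ ψ) (Pi.single z 1)
      = (Uᴴ * blockDiagonal (fun μ => NormedSpace.exp (c • H' μ)) * U) *ᵥ x := by
    rw [← exp_kronecker_single_mulVec_vecKron, smul_kronecker, hconj, ← Matrix.smul_mul,
      ← Matrix.mul_smul, ← blockDiagonal_smul, exp_conjTranspose_mul_mul U hU1 hU2,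
      exp_blockDiagonal_eq_blockDiagonal_exp]
    rfl
  have herror : vecKron (NormedSpace.exp (c • H) *ᵥ ψ) (Pi.single z 1) - V *ᵥ x
      = Uᴴ *ᵥ (blockDiagonal (fun μ => NormedSpace.exp (c • H' μ) - Uu μ) *ᵥ (U *ᵥ x)) := by
    rw [hexact, hV, sum_kronecker_single_eq_blockDiagonal, ← sub_mulVec, ← Matrix.sub_mul,
      ← Matrix.mul_sub, ← blockDiagonal_sub, ← mulVec_mulVec, ← mulVec_mulVec]
    rfl
  have hblocks : ∀ μ,
      enorm₂ ((NormedSpace.exp (c • H' μ) - Uu μ) *ᵥ fun i => (U *ᵥ x) (i, μ))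
        ≤ ε * enorm₂ fun i => (U *ᵥ x) (i, μ) := fun μ => by
    rw [← neg_sub, neg_mulVec, enorm₂_neg]
    exact happrox μ _ (hsupp ψ μ)
  have hUx : enorm₂ (U *ᵥ x) = 1 := by
    rw [enorm₂_mulVec_of_conjTranspose_mul_self U hU1, enorm₂_vecKron, hψ, enorm₂_single,
      mul_one]
  rw [herror, enorm₂_mulVec_of_conjTranspose_mul_self Uᴴ (by rwa [conjTranspose_conjTranspose])]
  simpa [hUx] using enorm₂_blockDiagonal_mulVec_le _ _ hε hblocks

/-- Correctness of Hamiltonian simulation by block diagonalization. -/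
theorem block_diagonalization_simulation
    {N M N' M' : ℕ} (hdim : N * M = N' * M')
    (H : Matrix (Fin N) (Fin N) ℂ) (hH : H.IsHermitian)
    (t ε : ℝ) (hε : 0 ≤ ε)
    (U : Matrix (Fin N' × Fin M') (Fin N × Fin M) ℂ)
    (hU1 : Uᴴ * U = 1) (hU2 : U * Uᴴ = 1)
    (z : Fin M)
    (H' : Fin M' → Matrix (Fin N') (Fin N') ℂ)
    (hH' : ∀ μ, (H' μ).IsHermitian)
    (hblock : U * (H ⊗ₖ single z z (1 : ℂ)) * Uᴴ
      = ∑ μ, (H' μ) ⊗ₖ single μ μ (1 : ℂ))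
    (I' : Fin M' → Submodule ℂ (Fin N' → ℂ))
    (hsupp : ∀ ψ : Fin N → ℂ, ∀ μ : Fin M',
      (fun i => U.mulVec (vecKron ψ (Pi.single z 1)) (i, μ)) ∈ I' μ)
    (Uu : Fin M' → Matrix (Fin N') (Fin N') ℂ)
    (happrox : ∀ μ : Fin M', ∀ φ ∈ I' μ,
      enorm₂ ((Uu μ - NormedSpace.exp ((-(Complex.I * (t : ℂ))) • H' μ)).mulVec φ)
        ≤ ε * enorm₂ φ)
    (V : Matrix (Fin N × Fin M) (Fin N × Fin M) ℂ)
    (hV : V = Uᴴ * (∑ μ, (Uu μ) ⊗ₖ single μ μ (1 : ℂ)) * U)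
    (ψ : Fin N → ℂ) (hψ : enorm₂ ψ = 1) :
    enorm₂ (vecKron ((NormedSpace.exp ((-(Complex.I * (t : ℂ))) • H)).mulVec ψ)
        (Pi.single z 1)
      - V.mulVec (vecKron ψ (Pi.single z 1))) ≤ ε :=
  block_diagonalization_simulation_general H t ε hε U hU1 hU2 z H' hblock I' hsupp Uu happrox V hV ψ
    hψ
end

section
/- Let h_1, …, h_L be positive semidefinite N×N complex matrices, H = Σ_{X=1}^L h_X, and on ℂ^N ⊗ ℂ^{L+1} (with ancilla standard basis e_0, e_1, …, e_L) define the Hermitian matrix H' = Σ_{X=1}^L √(h_X) ⊗ (|X⟩⟨0| + |0⟩⟨X|), where √(h_X) is the positive semidefinite square root of h_X and |X⟩⟨0|, |0⟩⟨X| are the matrix units e_X e_0† and e_0 e_X†. Then for every φ ∈ ℂ^N, (H')² (φ ⊗ e_0) = (H φ) ⊗ e_0. -/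
open Matrix Kronecker
open scoped ComplexOrder

/-- The positive semidefinite square root, as `Matrix.PosSemidef.sqrt` was defined in Mathlib
(Dec 2024); it has since been removed from Mathlib. -/
noncomputable def Matrix.PosSemidef.sqrt {n 𝕜 : Type*} [Fintype n] [DecidableEq n] [RCLike 𝕜]
    {A : Matrix n n 𝕜} (hA : A.PosSemidef) : Matrix n n 𝕜 :=
  hA.1.eigenvectorUnitary.1 * diagonal ((↑) ∘ (√·) ∘ hA.1.eigenvalues) *
    (star hA.1.eigenvectorUnitary : Matrix n n 𝕜)

/-!
Write `H' = ∑_X A_X ⊗ E_X` with `A_X = √h_X` and `E_X = |X⟩⟨0| + |0⟩⟨X|`. One application of `H'`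
hops the ancilla from `e₀` to each `e_X`, picking up `A_X φ`; a second application can only bring
`e_X` back to `e₀` through the same term `A_X ⊗ E_X`, so the cross terms vanish and
`H'² (φ ⊗ e₀) = ∑_X A_X² φ ⊗ e₀ = H φ ⊗ e₀`.
-/

theorem Matrix.PosSemidef.sqrt_mul_self {n 𝕜 : Type*} [Fintype n] [DecidableEq n] [RCLike 𝕜]
    {A : Matrix n n 𝕜} (hA : A.PosSemidef) : hA.sqrt * hA.sqrt = A := by
  have hU : (star hA.1.eigenvectorUnitary : Matrix n n 𝕜) * hA.1.eigenvectorUnitary = 1 :=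
    Unitary.coe_star_mul_self _
  have hsq : diagonal ((↑) ∘ (√·) ∘ hA.1.eigenvalues) * diagonal ((↑) ∘ (√·) ∘ hA.1.eigenvalues)
      = diagonal ((↑) ∘ hA.1.eigenvalues : n → 𝕜) := by
    rw [diagonal_mul_diagonal]
    congr 1
    funext k
    simp only [Function.comp_apply, ← RCLike.ofReal_mul,
      Real.mul_self_sqrt (hA.eigenvalues_nonneg k)]
  conv_rhs => rw [hA.1.spectral_theorem, Unitary.conjStarAlgAut_apply]
  simp only [Matrix.PosSemidef.sqrt, mul_assoc]
  rw [← mul_assoc (star _ : Matrix n n 𝕜), hU, one_mul, ← mul_assoc (diagonal _), hsq]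

section vecKron

variable {ι κ : Type*}

theorem vecKron_zero_right (v : ι → ℂ) : vecKron v (0 : κ → ℂ) = 0 := by
  ext p
  simp [vecKron]

theorem vecKron_sum_left {α : Type*} (s : Finset α) (v : α → ι → ℂ) (w : κ → ℂ) :
    vecKron (∑ a ∈ s, v a) w = ∑ a ∈ s, vecKron (v a) w := by
  ext p
  simp [vecKron, Finset.sum_apply, Finset.sum_mul]

theorem kronecker_mulVec_vecKron {l m : Type*} [Fintype ι] [Fintype κ]
    (A : Matrix l ι ℂ) (B : Matrix m κ ℂ) (v : ι → ℂ) (w : κ → ℂ) :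
    (A ⊗ₖ B) *ᵥ vecKron v w = vecKron (A *ᵥ v) (B *ᵥ w) := by
  ext ⟨i, j⟩
  simp only [mulVec, dotProduct, vecKron, kroneckerMap_apply, Fintype.sum_prod_type,
    Finset.sum_mul_sum, mul_mul_mul_comm]

end vecKron

section GapAmplification

variable {n : Type*} [Fintype n] {L : ℕ}

def hopping (X : Fin L) : Matrix (Fin (L + 1)) (Fin (L + 1)) ℂ :=
  single X.succ 0 1 + single 0 X.succ 1

theorem hopping_mulVec_single_zero (X : Fin L) :
    hopping X *ᵥ Pi.single 0 1 = Pi.single X.succ 1 := by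
  simp only [hopping, add_mulVec, single_mulVec_eq, Pi.single_eq_same,
    Pi.single_eq_of_ne (Fin.succ_ne_zero X), mul_one, mul_zero, one_smul, zero_smul, add_zero]

theorem hopping_mulVec_single_succ (X Y : Fin L) :
    hopping X *ᵥ Pi.single Y.succ 1 = if X = Y then Pi.single 0 1 else 0 := by
  simp only [hopping, add_mulVec, single_mulVec_eq, Pi.single_eq_of_ne (Fin.succ_ne_zero _).symm,
    Pi.single_apply, Fin.succ_inj, mul_zero, zero_smul, zero_add, one_mul, ite_smul, one_smul]

noncomputable def gapAmplifiedHamiltonian (A : Fin L → Matrix n n ℂ) :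
    Matrix (n × Fin (L + 1)) (n × Fin (L + 1)) ℂ :=
  ∑ X, A X ⊗ₖ hopping X

theorem gapAmplifiedHamiltonian_mulVec_ground (A : Fin L → Matrix n n ℂ) (v : n → ℂ) :
    gapAmplifiedHamiltonian A *ᵥ vecKron v (Pi.single 0 1)
      = ∑ X, vecKron (A X *ᵥ v) (Pi.single X.succ 1) := by
  simp only [gapAmplifiedHamiltonian, sum_mulVec, kronecker_mulVec_vecKron,
    hopping_mulVec_single_zero]

theorem gapAmplifiedHamiltonian_mulVec_excited (A : Fin L → Matrix n n ℂ) (w : n → ℂ) (Y : Fin L) :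
    gapAmplifiedHamiltonian A *ᵥ vecKron w (Pi.single Y.succ 1)
      = vecKron (A Y *ᵥ w) (Pi.single 0 1) := by
  simp only [gapAmplifiedHamiltonian, sum_mulVec, kronecker_mulVec_vecKron,
    hopping_mulVec_single_succ, apply_ite, vecKron_zero_right, Finset.sum_ite_eq',
    Finset.mem_univ, if_true]

theorem gapAmplifiedHamiltonian_mul_self_mulVec_ground (A : Fin L → Matrix n n ℂ) (v : n → ℂ) :
    (gapAmplifiedHamiltonian A * gapAmplifiedHamiltonian A) *ᵥ vecKron v (Pi.single 0 1)
      = vecKron ((∑ X, A X * A X) *ᵥ v) (Pi.single 0 1) := by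
  simp only [← mulVec_mulVec, gapAmplifiedHamiltonian_mulVec_ground, mulVec_sum,
    gapAmplifiedHamiltonian_mulVec_excited, sum_mulVec, vecKron_sum_left]

end GapAmplification

/-- The gap-amplified Hamiltonian H' squares to H on the ancilla state `e₀`. -/
theorem gap_amplification_square
    {N L : ℕ}
    (h : Fin L → Matrix (Fin N) (Fin N) ℂ)
    (hpsd : ∀ X, (h X).PosSemidef)
    (H : Matrix (Fin N) (Fin N) ℂ) (hH : H = ∑ X, h X)
    (H' : Matrix (Fin N × Fin (L + 1)) (Fin N × Fin (L + 1)) ℂ)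
    (hH' : H' = ∑ X, (hpsd X).sqrt ⊗ₖ
      (single X.succ 0 (1 : ℂ) + single 0 X.succ (1 : ℂ)))
    (φ : Fin N → ℂ) :
    (H' * H').mulVec (vecKron φ (Pi.single 0 1))
      = vecKron (H.mulVec φ) (Pi.single 0 1) := by
  have hH'_eq : H' = gapAmplifiedHamiltonian fun X => (hpsd X).sqrt := hH'
  rw [hH'_eq, gapAmplifiedHamiltonian_mul_self_mulVec_ground, hH]
  simp only [Matrix.PosSemidef.sqrt_mul_self]
end

section
/- Let A be an N×N Hermitian complex matrix, W an N×N unitary matrix, D an N×N Hermitian matrix, T > 0 and ε ≥ 0, and suppose the spectral norm bound ‖W† A W − D‖ ≤ ε/(2T) holds. Then for every t with 0 ≤ t ≤ T and every N×N matrix U_t with ‖exp(−i t D) − U_t‖ ≤ ε/2, one has ‖exp(−i t A) − W U_t W†‖ ≤ ε. -/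
open Matrix

/-- Spectral (ℓ²-operator) norm of a complex matrix. -/
noncomputable def specNorm {n : Type*} [Fintype n] [DecidableEq n]
    (A : Matrix n n ℂ) : ℝ :=
  ‖Matrix.toEuclideanCLM (𝕜 := ℂ) A‖

/-!
Conjugation by the unitary `W` turns `exp (-itA)` into `W exp (-itB) W†` with `B = W†AW` and
preserves norms, so the error is at most `‖exp (-itB) - exp (-itD)‖ + ε/2`. The first term is at
most `t ‖B - D‖ ≤ ε/2`: for skew-adjoint `x, y` the path `s ↦ exp (s x) exp ((1 - s) y)` from
`exp y` to `exp x` has velocity `exp (s x) (x - y) exp ((1 - s) y)`, whose norm is `‖x - y‖`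
because both outer factors are unitary.
-/

open NormedSpace Complex

section CStarAlgebra

variable {𝔸 : Type*} [CStarAlgebra 𝔸]

lemma norm_mul_mul_eq_of_mem_unitary {u v : 𝔸} (hu : u ∈ unitary 𝔸) (hv : v ∈ unitary 𝔸)
    (z : 𝔸) : ‖u * z * v‖ = ‖z‖ := by
  rw [CStarRing.norm_mul_mem_unitary _ hv, CStarRing.norm_mem_unitary_mul _ hu]

lemma exp_unitary_conj {u : 𝔸} (hu : u ∈ unitary 𝔸) (x : 𝔸) :
    exp (u * x * star u) = u * exp x * star u := by
  let +nondep : NormedAlgebra ℚ 𝔸 := .restrictScalars ℚ ℂ 𝔸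
  exact exp_units_conj (Unitary.toUnits ⟨u, hu⟩) x

lemma hasDerivAt_exp_smul_mul_exp_one_sub_smul (x y : 𝔸) (s : ℝ) :
    HasDerivAt (fun r : ℝ => exp (r • x) * exp ((1 - r) • y))
      (exp (s • x) * (x - y) * exp ((1 - s) • y)) s := by
  have hy : HasDerivAt (fun r : ℝ => exp ((1 - r) • y)) ((-1 : ℝ) • (y * exp ((1 - s) • y))) s :=
    (hasDerivAt_exp_smul_const' y (1 - s)).scomp s ((hasDerivAt_id s).const_sub 1)
  refine ((hasDerivAt_exp_smul_const x s).mul hy).congr_deriv ?_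
  rw [neg_one_smul]
  noncomm_ring

theorem norm_exp_sub_exp_le_of_mem_skewAdjoint {x y : 𝔸} (hx : x ∈ skewAdjoint 𝔸)
    (hy : y ∈ skewAdjoint 𝔸) : ‖exp x - exp y‖ ≤ ‖x - y‖ := by
  let +nondep : NormedAlgebra ℚ 𝔸 := .restrictScalars ℚ ℂ 𝔸
  have hunit : ∀ (r : ℝ) {z : 𝔸}, z ∈ skewAdjoint 𝔸 → exp (r • z) ∈ unitary 𝔸 := fun r _ hz =>
    exp_mem_unitary_of_mem_skewAdjoint (skewAdjoint.smul_mem r hz)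
  simpa using norm_image_sub_le_of_norm_deriv_le_segment_01'
    (fun s _ => (hasDerivAt_exp_smul_mul_exp_one_sub_smul x y s).hasDerivWithinAt)
    (fun s _ => (norm_mul_mul_eq_of_mem_unitary (hunit s hx) (hunit (1 - s) hy) _).le)

lemma IsSelfAdjoint.neg_I_mul_smul_mem_skewAdjoint {a : 𝔸} (ha : IsSelfAdjoint a) (t : ℝ) :
    (-(I * t)) • a ∈ skewAdjoint 𝔸 :=
  ha.smul_mem_skewAdjoint (by simp [skewAdjoint.mem_iff])

theorem norm_exp_neg_I_mul_smul_sub_le {a b : 𝔸} (ha : IsSelfAdjoint a) (hb : IsSelfAdjoint b)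
    (t : ℝ) : ‖exp ((-(I * t)) • a) - exp ((-(I * t)) • b)‖ ≤ |t| * ‖a - b‖ :=
  calc _ ≤ ‖(-(I * t)) • a - (-(I * t)) • b‖ := norm_exp_sub_exp_le_of_mem_skewAdjoint
          (ha.neg_I_mul_smul_mem_skewAdjoint t) (hb.neg_I_mul_smul_mem_skewAdjoint t)
    _ = |t| * ‖a - b‖ := by rw [← smul_sub, norm_smul]; simp

theorem norm_exp_neg_I_mul_smul_sub_unitary_conj_le {a d u v : 𝔸} (ha : IsSelfAdjoint a)
    (hd : IsSelfAdjoint d) (hu : u ∈ unitary 𝔸) (t : ℝ) :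
    ‖exp ((-(I * t)) • a) - u * v * star u‖
      ≤ |t| * ‖star u * a * u - d‖ + ‖exp ((-(I * t)) • d) - v‖ := by
  set b := star u * a * u
  have hconj : exp ((-(I * t)) • a) = u * exp ((-(I * t)) • b) * star u := by
    have hb : u * b * star u = a := by
      simp only [b, ← mul_assoc, Unitary.mul_star_self_of_mem hu, one_mul]
      rw [mul_assoc, Unitary.mul_star_self_of_mem hu, mul_one]
    rw [← exp_unitary_conj hu, mul_smul_comm, smul_mul_assoc, hb]
  calc ‖exp ((-(I * t)) • a) - u * v * star u‖ = ‖exp ((-(I * t)) • b) - v‖ := by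
        rw [hconj, ← sub_mul, ← mul_sub,
          norm_mul_mul_eq_of_mem_unitary hu (Unitary.star_mem hu)]
    _ ≤ ‖exp ((-(I * t)) • b) - exp ((-(I * t)) • d)‖ + ‖exp ((-(I * t)) • d) - v‖ :=
        norm_sub_le_norm_sub_add_norm_sub _ _ _
    _ ≤ _ := by gcongr; exact norm_exp_neg_I_mul_smul_sub_le (ha.conjugate' u) hd t

end CStarAlgebra

open scoped Matrix.Norms.L2Operator

lemma specNorm_eq_norm {n : Type*} [Fintype n] [DecidableEq n] (M : Matrix n n ℂ) :
    specNorm M = ‖M‖ :=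
  (cstar_norm_def M).symm

theorem simulation_by_diagonalization_general
    {N : ℕ} (A W D : Matrix (Fin N) (Fin N) ℂ)
    (hA : A.IsHermitian) (hW : W ∈ Matrix.unitaryGroup (Fin N) ℂ)
    (hD : D.IsHermitian)
    (T ε : ℝ) (hT : 0 < T)
    (hdiag : specNorm (Wᴴ * A * W - D) ≤ ε / (2 * T))
    (t : ℝ) (ht0 : 0 ≤ t) (htT : t ≤ T)
    (Ut : Matrix (Fin N) (Fin N) ℂ)
    (hUt : specNorm (NormedSpace.exp ((-(Complex.I * (t : ℂ))) • D) - Ut) ≤ ε / 2) :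
    specNorm (NormedSpace.exp ((-(Complex.I * (t : ℂ))) • A) - W * Ut * Wᴴ) ≤ ε := by
  rw [specNorm_eq_norm] at hdiag hUt ⊢
  have hdrift : |t| * ‖Wᴴ * A * W - D‖ ≤ ε / 2 :=
    calc |t| * ‖Wᴴ * A * W - D‖ ≤ T * (ε / (2 * T)) := by
          gcongr
          rwa [abs_of_nonneg ht0]
      _ = ε / 2 := by field_simp
  exact (norm_exp_neg_I_mul_smul_sub_unitary_conj_le hA hD hW t).trans
    ((add_le_add hdrift hUt).trans_eq (add_halves ε))

/-- Correctness of Hamiltonian simulation by (Lie-algebra) diagonalization. -/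
theorem simulation_by_diagonalization
    {N : ℕ} (A W D : Matrix (Fin N) (Fin N) ℂ)
    (hA : A.IsHermitian) (hW : W ∈ Matrix.unitaryGroup (Fin N) ℂ)
    (hD : D.IsHermitian)
    (T ε : ℝ) (hT : 0 < T) (hε : 0 ≤ ε)
    (hdiag : specNorm (Wᴴ * A * W - D) ≤ ε / (2 * T))
    (t : ℝ) (ht0 : 0 ≤ t) (htT : t ≤ T)
    (Ut : Matrix (Fin N) (Fin N) ℂ)
    (hUt : specNorm (NormedSpace.exp ((-(Complex.I * (t : ℂ))) • D) - Ut) ≤ ε / 2) :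
    specNorm (NormedSpace.exp ((-(Complex.I * (t : ℂ))) • A) - W * Ut * Wᴴ) ≤ ε :=
  simulation_by_diagonalization_general A W D hA hW hD T ε hT hdiag t ht0 htT Ut hUt
end

section
/- Identify the n-fold tensor power (ℂ^d)^{⊗n} with the space V of functions (Fin n → Fin d) → ℂ. For a permutation σ of Fin n, let P_σ : V → V be the linear map (P_σ f)(x) = f(x ∘ σ). For a d×d complex matrix A, let A^{⊗n} denote the linear map on V given by the matrix with entries (A^{⊗n})_{x,y} = ∏_i A_{x(i), y(i)}. Then a linear endomorphism T of V commutes with P_σ for every permutation σ of Fin n if and only if T lies in the ℂ-linear span of { A^{⊗n} : A a d×d complex matrix }. -/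
/-- The n-fold tensor power (ℂ^d)^{⊗n}, as functions (Fin n → Fin d) → ℂ. -/
abbrev TensorPowSpace (n d : ℕ) := (Fin n → Fin d) → ℂ

/-- The permutation action P_σ on tensor factors: (P_σ f)(x) = f(x ∘ σ). -/
def permAction (n d : ℕ) (σ : Equiv.Perm (Fin n)) :
    TensorPowSpace n d →ₗ[ℂ] TensorPowSpace n d where
  toFun f := fun x => f (x ∘ σ)
  map_add' _ _ := rfl
  map_smul' _ _ := rfl

/-- The n-fold tensor power A^{⊗n} of a single-site operator A. -/
noncomputable def tensorPow (n d : ℕ) (A : Matrix (Fin d) (Fin d) ℂ) :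
    TensorPowSpace n d →ₗ[ℂ] TensorPowSpace n d :=
  Matrix.toLin' (Matrix.of fun x y => ∏ i, A (x i) (y i))

/-! A matrix on `ι → κ` commutes with all permutations of the tensor factors iff its entries are
invariant under permuting row and column indices simultaneously. Such a matrix is, up to the
factor `|Perm ι|`, a combination of the symmetrized matrix units `∑ σ, E (x ∘ σ) (y ∘ σ)`, and
Ryser's formula for the permanent expresses each of these as the alternating sum
`∑ s, (-1) ^ |sᶜ| • (∑ i ∈ s, E (x i) (y i))^{⊗ι}` of tensor powers (a polarization identity). -/

open Finset Equiv

theorem Finset.sum_superset_neg_one_pow_card_compl {R α : Type*} [Ring R] [Fintype α]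
    [DecidableEq α] (t : Finset α) :
    ∑ s with t ⊆ s, (-1 : R) ^ #sᶜ = if t = univ then 1 else 0 := by
  calc ∑ s with t ⊆ s, (-1 : R) ^ #sᶜ = ∑ u ∈ tᶜ.powerset, (-1 : R) ^ #u :=
        sum_nbij' compl compl (by simp) (by simp [subset_compl_comm]) (by simp) (by simp)
          (by simp)
    _ = ((∑ u ∈ tᶜ.powerset, (-1 : ℤ) ^ #u : ℤ) : R) := by push_cast; rfl
    _ = if t = univ then 1 else 0 := by
        rw [sum_powerset_neg_one_pow_card]
        simp [apply_ite (Int.cast : ℤ → R)]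

theorem Fintype.sum_surjective_eq_sum_perm {M n : Type*} [AddCommMonoid M] [Fintype n]
    [DecidableEq n] (g : (n → n) → M) :
    ∑ p : n → n with Function.Surjective p, g p = ∑ σ : Perm n, g σ := by
  symm
  refine sum_bij (fun σ _ => ⇑σ) (by simp [Equiv.surjective])
    (fun _ _ _ _ h => DFunLike.coe_injective h) (fun p hp => ?_) (fun _ _ => rfl)
  have hp : Function.Bijective p := Finite.surjective_iff_bijective.1 (mem_filter.1 hp).2
  exact ⟨Equiv.ofBijective p hp, mem_univ _, rfl⟩

/-- Ryser's formula. -/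
theorem Matrix.permanent_eq_sum_neg_one_pow_card_compl {R n : Type*} [CommRing R] [Fintype n]
    [DecidableEq n] (M : Matrix n n R) :
    M.permanent = ∑ s : Finset n, (-1) ^ #sᶜ * ∏ j, ∑ i ∈ s, M i j := by
  have expand (s : Finset n) :
      ∏ j, ∑ i ∈ s, M i j = ∑ p : n → n, if univ.image p ⊆ s then ∏ j, M (p j) j else 0 := by
    rw [prod_univ_sum, ← sum_filter]
    congr 1
    ext p
    simp [image_subset_iff]
  have collapse (p : n → n) :
      ∑ s : Finset n, (-1) ^ #sᶜ * (if univ.image p ⊆ s then ∏ j, M (p j) j else 0) =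
        if Function.Surjective p then ∏ j, M (p j) j else 0 := by
    simp only [mul_ite, mul_zero]
    rw [← sum_filter, ← sum_mul, sum_superset_neg_one_pow_card_compl]
    have : univ.image p = univ ↔ Function.Surjective p := by
      simp [eq_univ_iff_forall, Function.Surjective]
    split_ifs <;> simp_all
  simp only [expand, mul_sum]
  rw [sum_comm]
  simp only [collapse]
  rw [← sum_filter, Fintype.sum_surjective_eq_sum_perm]
  rfl

theorem Matrix.toLin'_comp_funLeft_eq_funLeft_comp_iff {R m : Type*} [CommSemiring R]
    [Fintype m] [DecidableEq m] (M : Matrix m m R) (e : m ≃ m) :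
    toLin' M ∘ₗ LinearMap.funLeft R R e = LinearMap.funLeft R R e ∘ₗ toLin' M ↔
      M.submatrix e e = M := by
  rw [← toLin'.injective.eq_iff, toLin'_submatrix, eq_comm]
  exact ((LinearEquiv.funCongrLeft R R e).comp_toLinearMap_symm_eq _ _).symm

namespace Matrix

variable {ι κ R : Type*}

variable (ι κ R) in
def permInvariant [Semiring R] : Submodule R (Matrix (ι → κ) (ι → κ) R) where
  carrier := {M | ∀ σ : Perm ι, M.submatrix (· ∘ σ) (· ∘ σ) = M}
  add_mem' hM hN σ := congrArg₂ (· + ·) (hM σ) (hN σ)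
  zero_mem' _ := rfl
  smul_mem' c _ hM σ := congrArg (c • ·) (hM σ)

variable [Fintype ι]

variable (ι) in
def tensorPower [CommSemiring R] (A : Matrix κ κ R) : Matrix (ι → κ) (ι → κ) R :=
  of fun x y => ∏ i, A (x i) (y i)

theorem tensorPower_mem_permInvariant [CommSemiring R] (A : Matrix κ κ R) :
    tensorPower ι A ∈ permInvariant ι κ R := fun σ => by
  ext x y
  exact Fintype.prod_equiv σ _ _ fun _ => rfl

section

variable [DecidableEq ι] [DecidableEq κ]

def symmetrizedSingle [Semiring R] (x y : ι → κ) : Matrix (ι → κ) (ι → κ) R :=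
  ∑ σ : Perm ι, single (x ∘ σ) (y ∘ σ) 1

theorem symmetrizedSingle_eq_sum_tensorPower [CommRing R] (x y : ι → κ) :
    (symmetrizedSingle x y : Matrix (ι → κ) (ι → κ) R) =
      ∑ s : Finset ι, (-1 : R) ^ #sᶜ • tensorPower ι (∑ i ∈ s, single (x i) (y i) 1) := by
  ext a b
  have ryser := permanent_eq_sum_neg_one_pow_card_compl
    (of fun i j => (single (x i) (y i) 1 : Matrix κ κ R) (a j) (b j))
  simp only [permanent, of_apply] at ryser
  simp only [symmetrizedSingle, tensorPower, sum_apply, smul_apply, of_apply, smul_eq_mul]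
  convert ryser using 2 with σ
  simp [single, prod_ite_zero, funext_iff, forall_and]

theorem symmetrizedSingle_mem_span_tensorPower [CommRing R] (x y : ι → κ) :
    (symmetrizedSingle x y : Matrix (ι → κ) (ι → κ) R) ∈
      Submodule.span R (Set.range (tensorPower ι)) := by
  rw [symmetrizedSingle_eq_sum_tensorPower]
  exact Submodule.sum_mem _ fun s _ =>
    Submodule.smul_mem _ _ (Submodule.subset_span (Set.mem_range_self _))

theorem card_perm_smul_eq_sum_symmetrizedSingle [Fintype κ] [Semiring R]
    {M : Matrix (ι → κ) (ι → κ) R} (hM : M ∈ permInvariant ι κ R) :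
    Fintype.card (Perm ι) • M = ∑ x, ∑ y, M x y • symmetrizedSingle x y := by
  have reindex (σ : Perm ι) :
      ∑ x, ∑ y, M x y • single (x ∘ σ) (y ∘ σ) (1 : R) = M := by
    let e : (ι → κ) ≃ (ι → κ) := σ.symm.arrowCongr (Equiv.refl κ)
    calc ∑ x, ∑ y, M x y • single (x ∘ σ) (y ∘ σ) (1 : R)
        = ∑ x, ∑ y, single (e x) (e y) (M (e x) (e y)) := by
          refine sum_congr rfl fun x _ => sum_congr rfl fun y _ => ?_
          rw [← congrFun₂ (hM σ) x y, smul_single, smul_eq_mul, mul_one]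
          rfl
      _ = ∑ x, ∑ y, single x y (M x y) :=
          Fintype.sum_equiv e _ _ fun x => Fintype.sum_equiv e _ _ fun y => rfl
      _ = M := (matrix_eq_sum_single M).symm
  calc Fintype.card (Perm ι) • M
      = ∑ σ : Perm ι, ∑ x, ∑ y, M x y • single (x ∘ σ) (y ∘ σ) (1 : R) := by
        rw [sum_congr rfl fun σ _ => reindex σ, sum_const, card_univ]
    _ = ∑ x, ∑ y, M x y • symmetrizedSingle x y := by
        simp only [symmetrizedSingle, smul_sum]
        rw [sum_comm]
        exact sum_congr rfl fun x _ => sum_comm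

theorem span_range_tensorPower [Fintype κ] [Field R] [CharZero R] :
    Submodule.span R (Set.range (tensorPower ι)) = permInvariant ι κ R := by
  refine le_antisymm (Submodule.span_le.2 ?_) fun M hM => ?_
  · rintro _ ⟨A, rfl⟩
    exact tensorPower_mem_permInvariant A
  · have hcard : (Fintype.card (Perm ι) : R) ≠ 0 := Nat.cast_ne_zero.2 Fintype.card_ne_zero
    rw [← Submodule.smul_mem_iff _ hcard, Nat.cast_smul_eq_nsmul,
      card_perm_smul_eq_sum_symmetrizedSingle hM]
    exact Submodule.sum_mem _ fun x _ => Submodule.sum_mem _ fun y _ =>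
      Submodule.smul_mem _ _ (symmetrizedSingle_mem_span_tensorPower x y)

end

end Matrix

open Matrix in
/-- Schur–Weyl duality (commutant form): an endomorphism of (ℂ^d)^{⊗n} commutes
with all permutations of tensor factors iff it lies in the span of the A^{⊗n}. -/
theorem schur_weyl_commutant
    (n d : ℕ) (T : TensorPowSpace n d →ₗ[ℂ] TensorPowSpace n d) :
    (∀ σ : Equiv.Perm (Fin n),
        T ∘ₗ permAction n d σ = permAction n d σ ∘ₗ T)
    ↔ T ∈ Submodule.span ℂ
        {S | ∃ A : Matrix (Fin d) (Fin d) ℂ, S = tensorPow n d A} := by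
  have hP (σ : Perm (Fin n)) :
      permAction n d σ = LinearMap.funLeft ℂ ℂ (σ.symm.arrowCongr (Equiv.refl (Fin d))) := rfl
  have hS : {S | ∃ A : Matrix (Fin d) (Fin d) ℂ, S = tensorPow n d A} =
      toLin'.toLinearMap '' Set.range (tensorPower (Fin n) (R := ℂ)) := by
    ext S
    simp [eq_comm, tensorPow, tensorPower]
  rw [hS, Submodule.span_image, ← toLin'_toMatrix' T, Submodule.mem_map_equiv,
    LinearEquiv.symm_apply_apply, span_range_tensorPower]
  simp only [hP, toLin'_comp_funLeft_eq_funLeft_comp_iff]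
  rfl
end

section
/- Let E ∈ ℝ, t ≥ 0, δ ≥ 0 and η ∈ [0,1]. Let (E'_k)_{k ∈ K} be a finite family of real numbers and (α_k)_{k ∈ K} complex amplitudes with Σ_k |α_k|² = 1 and Σ_{k : |E'_k − E| ≤ δ} |α_k|² ≥ η. Then ( Σ_k |α_k|² · |exp(−i t E) − exp(−i t E'_k)|² )^{1/2} ≤ t δ + 2 √(1 − η). -/
/-!
On the estimates within `δ` of `E` the two phases differ by at most `tδ`, since `θ ↦ exp (iθ)`
is 1-Lipschitz; on the others, of total weight at most `1 - η`, they differ by at most `2`. Hence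
the squared error is at most `(tδ)² + 4 (1 - η)`, and `√(a² + b² c) ≤ a + b √c`.
-/

open Complex Finset

theorem Complex.norm_exp_I_mul_ofReal_sub_exp_I_mul_ofReal_le (x y : ℝ) :
    ‖exp (I * x) - exp (I * y)‖ ≤ |x - y| := by
  have hfactor : exp (I * x) - exp (I * y) = exp (I * y) * (exp (I * ↑(x - y)) - 1) := by
    rw [mul_sub, mul_one, ← exp_add]
    push_cast
    ring_nf
  rw [hfactor, norm_mul, norm_exp_I_mul_ofReal, one_mul, ← Real.norm_eq_abs]
  exact Real.norm_exp_I_mul_ofReal_sub_one_le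

theorem Complex.norm_exp_I_mul_ofReal_sub_exp_I_mul_ofReal_le_two (x y : ℝ) :
    ‖exp (I * x) - exp (I * y)‖ ≤ 2 := by
  calc ‖exp (I * x) - exp (I * y)‖ ≤ ‖exp (I * x)‖ + ‖exp (I * y)‖ := norm_sub_le _ _
    _ = 2 := by rw [norm_exp_I_mul_ofReal, norm_exp_I_mul_ofReal]; norm_num

theorem Complex.neg_I_mul_mul_ofReal (t x : ℝ) : -(I * t * x) = I * ↑(-(t * x)) := by
  push_cast
  ring

theorem Complex.norm_exp_neg_I_mul_sub_exp_neg_I_mul_le {t : ℝ} (ht : 0 ≤ t) (x y : ℝ) :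
    ‖exp (-(I * t * x)) - exp (-(I * t * y))‖ ≤ t * |y - x| := by
  rw [neg_I_mul_mul_ofReal, neg_I_mul_mul_ofReal]
  calc _ ≤ |-(t * x) - -(t * y)| := norm_exp_I_mul_ofReal_sub_exp_I_mul_ofReal_le _ _
    _ = t * |y - x| := by
      rw [show -(t * x) - -(t * y) = t * (y - x) by ring, abs_mul, abs_of_nonneg ht]

theorem Complex.norm_exp_neg_I_mul_sub_exp_neg_I_mul_le_two (t x y : ℝ) :
    ‖exp (-(I * t * x)) - exp (-(I * t * y))‖ ≤ 2 := by
  rw [neg_I_mul_mul_ofReal, neg_I_mul_mul_ofReal]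
  exact norm_exp_I_mul_ofReal_sub_exp_I_mul_ofReal_le_two _ _

theorem Finset.sum_mul_sq_le_of_le_on_filter {ι : Type*} [Fintype ι]
    (p : ι → Prop) [DecidablePred p]
    {w f : ι → ℝ} {a b : ℝ} (hw : ∀ k, 0 ≤ w k) (hf : ∀ k, 0 ≤ f k)
    (hfa : ∀ k, p k → f k ≤ a) (hfb : ∀ k, f k ≤ b) :
    ∑ k, w k * f k ^ 2 ≤
      a ^ 2 * ∑ k ∈ univ.filter p, w k + b ^ 2 * ∑ k ∈ univ.filter (¬ p ·), w k := by
  have hterm : ∀ k {c}, f k ≤ c → w k * f k ^ 2 ≤ c ^ 2 * w k := fun k _ hc => by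
    rw [mul_comm]
    gcongr
    exacts [hw k, hf k]
  rw [← sum_filter_add_sum_filter_not univ p, mul_sum, mul_sum]
  exact add_le_add (sum_le_sum fun k hk => hterm k (hfa k (mem_filter.mp hk).2))
    (sum_le_sum fun k _ => hterm k (hfb k))

theorem Real.sqrt_sq_add_sq_mul_le {a b c : ℝ} (ha : 0 ≤ a) (hb : 0 ≤ b) (hc : 0 ≤ c) :
    √(a ^ 2 + b ^ 2 * c) ≤ a + b * √c :=
  Real.sqrt_le_iff.mpr ⟨by positivity, by
    nlinarith [Real.sq_sqrt hc, mul_nonneg (mul_nonneg ha hb) (Real.sqrt_nonneg c)]⟩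

theorem energy_measurement_simulation_error_general
    {K : Type*} [Fintype K] (E t δ η : ℝ)
    (ht : 0 ≤ t) (hδ : 0 ≤ δ)
    (E' : K → ℝ) (α : K → ℂ)
    (hnorm : ∑ k, ‖α k‖ ^ 2 = 1)
    (hconf : η ≤ ∑ k ∈ Finset.univ.filter (fun k => |E' k - E| ≤ δ), ‖α k‖ ^ 2) :
    Real.sqrt (∑ k, ‖α k‖ ^ 2 *
        ‖Complex.exp (-(Complex.I * t * E)) - Complex.exp (-(Complex.I * t * (E' k)))‖ ^ 2)
      ≤ t * δ + 2 * Real.sqrt (1 - η) := by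
  set good : K → Prop := fun k => |E' k - E| ≤ δ
  have hsplit := sum_filter_add_sum_filter_not univ good (fun k => ‖α k‖ ^ 2)
  have hbad_nonneg : 0 ≤ ∑ k ∈ univ.filter (¬ good ·), ‖α k‖ ^ 2 := by positivity
  have hbad : ∑ k ∈ univ.filter (¬ good ·), ‖α k‖ ^ 2 ≤ 1 - η := by linarith
  have hgood : ∑ k ∈ univ.filter good, ‖α k‖ ^ 2 ≤ 1 := by linarith
  have herror := sum_mul_sq_le_of_le_on_filter good (w := fun k => ‖α k‖ ^ 2)
    (a := t * δ) (b := 2)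
    (fun k => by positivity) (fun k => norm_nonneg _)
    (fun k hk => (norm_exp_neg_I_mul_sub_exp_neg_I_mul_le ht E (E' k)).trans (by gcongr))
    (fun k => norm_exp_neg_I_mul_sub_exp_neg_I_mul_le_two t E (E' k))
  calc _ ≤ √((t * δ) ^ 2 + 2 ^ 2 * (1 - η)) := by
        refine Real.sqrt_le_sqrt (herror.trans (add_le_add ?_ (by gcongr)))
        exact mul_le_of_le_one_right (sq_nonneg _) hgood
    _ ≤ t * δ + 2 * √(1 - η) :=
        Real.sqrt_sq_add_sq_mul_le (by positivity) zero_le_two (hbad_nonneg.trans hbad)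

/-- Error estimate for Hamiltonian simulation from precise energy measurements:
applying phases exp(−itE'_k) instead of exp(−itE) incurs Euclidean error at most
tδ + 2√(1−η) when weight at least η of the amplitudes lies within δ of E. -/
theorem energy_measurement_simulation_error
    {K : Type*} [Fintype K] (E t δ η : ℝ)
    (ht : 0 ≤ t) (hδ : 0 ≤ δ) (hη0 : 0 ≤ η) (hη1 : η ≤ 1)
    (E' : K → ℝ) (α : K → ℂ)
    (hnorm : ∑ k, ‖α k‖ ^ 2 = 1)
    (hconf : η ≤ ∑ k ∈ Finset.univ.filter (fun k => |E' k - E| ≤ δ), ‖α k‖ ^ 2) :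
    Real.sqrt (∑ k, ‖α k‖ ^ 2 *
        ‖Complex.exp (-(Complex.I * t * E)) - Complex.exp (-(Complex.I * t * (E' k)))‖ ^ 2)
      ≤ t * δ + 2 * Real.sqrt (1 - η) :=
  energy_measurement_simulation_error_general E t δ η ht hδ E' α hnorm hconf
end
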